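/- arXiv:1307.4035 — 4 statements merged into one kernel-verified Lean document; each statement's English description precedes it below -/
import Mathlib

section
/- In synchronous majority dynamics on a locally finite graph with odd degrees admitting a summable d-legal edge weighting, the Lyapunov functional L_t = (1/4) ∑_{(i,j)∈E} z(i,j)(A^i_{t+1} − A^j_t)^2 is monotone non-increasing in t. -/
/-!
For ±1 opinions `(A^i_{t+1} - A^j_t)^2 = 2 - 2 A^i_{t+1} A^j_t`, and the symmetry of `z` lets one
exchange `i` and `j` in `L_t`; hence
`2 (L_t - L_{t+1}) = ∑_i (A^i_{t+2} - A^i_t) ∑_{j ~ i} z(i,j) A^j_{t+1}`.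
Every term is nonnegative: `A^i_{t+2}` is the sign of the unweighted neighbour sum, which cannot
vanish because degrees are odd, and `d`-legality forces the weighted sum to have the same sign.
-/

open Finset

namespace Finset

variable {ι : Type*} {s : Finset ι} {B : ι → ℤ}

theorem sum_eq_card_filter_sub_card_filter_of_pm_one (hB : ∀ j ∈ s, B j = 1 ∨ B j = -1) :
    ∑ j ∈ s, B j = #(s.filter (B · = 1)) - #(s.filter (B · ≠ 1)) := by
  rw [← sum_filter_add_sum_filter_not s (B · = 1),
    sum_congr rfl fun j hj => (mem_filter.1 hj).2,
    sum_congr rfl fun j hj => (hB j (mem_filter.1 hj).1).resolve_left (mem_filter.1 hj).2]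
  simp only [sum_const, nsmul_eq_mul, mul_one, mul_neg]
  ring

theorem sum_ne_zero_of_pm_one_of_odd_card (hB : ∀ j ∈ s, B j = 1 ∨ B j = -1) (hs : Odd #s) :
    ∑ j ∈ s, B j ≠ 0 := by
  rw [sum_eq_card_filter_sub_card_filter_of_pm_one hB, sub_ne_zero, Ne, Nat.cast_inj]
  rintro hPM
  rw [← card_filter_add_card_filter_not (B · = 1), hPM] at hs
  exact Nat.not_even_iff_odd.2 hs (Even.add_self _)

/-- Each `B = -1` term weighs less than `(d + 1)/(d - 1)` times the lightest weight, and there are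
at most `(d - 1)/(d + 1)` times as many of them as `B = 1` terms. -/
theorem weighted_sum_pos_of_sum_pos {d : ℕ} (hcard : #s ≤ d) {w : ι → ℝ} (hw : ∀ j ∈ s, 0 < w j)
    (hlegal : ∀ j ∈ s, ∀ k ∈ s, w j / w k < ((d : ℝ) + 1) / ((d : ℝ) - 1))
    (hB : ∀ j ∈ s, B j = 1 ∨ B j = -1) (hS : 0 < ∑ j ∈ s, B j) :
    0 < ∑ j ∈ s, w j * B j := by
  have hPM := sum_eq_card_filter_sub_card_filter_of_pm_one hB ▸ hS
  set P := s.filter (B · = 1)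
  set M := s.filter (B · ≠ 1)
  replace hPM : #M < #P := by omega
  have hsplit : ∑ j ∈ s, w j * B j = ∑ j ∈ P, w j - ∑ j ∈ M, w j := by
    rw [← sum_filter_add_sum_filter_not s (B · = 1), sub_eq_add_neg, ← sum_neg_distrib]
    congr 1 <;> refine sum_congr rfl fun j hj => ?_
    · simp [(mem_filter.1 hj).2]
    · simp [(hB j (mem_filter.1 hj).1).resolve_left (mem_filter.1 hj).2]
  rw [hsplit, sub_pos]
  obtain ⟨k, hk, hmin⟩ := s.exists_min_image w (nonempty_of_sum_ne_zero hS.ne')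
  rcases M.eq_empty_or_nonempty with hM | hM
  · rw [hM, sum_empty]
    exact sum_pos (fun j hj => hw j (filter_subset _ _ hj)) (card_pos.1 (by omega))
  set r : ℝ := ((d : ℝ) + 1) / ((d : ℝ) - 1)
  have hd : 0 < (d : ℝ) - 1 := by
    have hr : 1 < r := by simpa [div_self (hw k hk).ne'] using hlegal k hk k hk
    by_contra! h
    have : r ≤ 0 := div_nonpos_of_nonneg_of_nonpos (by positivity) h
    linarith
  have hcount : #M * r ≤ #P := by
    have : (#P : ℝ) + #M ≤ d := by
      exact_mod_cast (card_filter_add_card_filter_not (s := s) (B · = 1)).trans_le hcard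
    have : (#M : ℝ) + 1 ≤ #P := by exact_mod_cast hPM
    rw [mul_div_assoc', div_le_iff₀ hd]
    nlinarith
  calc ∑ j ∈ M, w j < ∑ _j ∈ M, r * w k :=
        sum_lt_sum_of_nonempty hM fun j hj => by
          have hj := filter_subset _ _ hj
          exact (div_lt_iff₀ (hw k hk)).1 (hlegal j hj k hk)
    _ = #M * r * w k := by rw [sum_const, nsmul_eq_mul, mul_assoc]
    _ ≤ #P * w k := mul_le_mul_of_nonneg_right hcount (hw k hk).le
    _ ≤ ∑ j ∈ P, w j := by
        simpa using card_nsmul_le_sum P w (w k) fun j hj => hmin j (filter_subset _ _ hj)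

end Finset

theorem sub_mul_nonneg_of_pm_one {a c x : ℝ} (ha : a = 1 ∨ a = -1) (hc : c = 1 ∨ c = -1)
    (hcx : 0 < c * x) : 0 ≤ (c - a) * x := by
  rcases ha with rfl | rfl <;> rcases hc with rfl | rfl <;> linarith

namespace SimpleGraph

variable {V : Type*} (G : SimpleGraph V)

theorem tsum_adj_swap {α : Type*} [AddCommMonoid α] [TopologicalSpace α] (f : V → V → α) :
    ∑' p : {p : V × V // G.Adj p.1 p.2}, f p.1.1 p.1.2 =
      ∑' p : {p : V × V // G.Adj p.1 p.2}, f p.1.2 p.1.1 :=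
  let e : {p : V × V // G.Adj p.1 p.2} ≃ {p : V × V // G.Adj p.1 p.2} :=
    ⟨fun p => ⟨p.1.swap, p.2.symm⟩, fun p => ⟨p.1.swap, p.2.symm⟩, fun _ => rfl, fun _ => rfl⟩
  (e.tsum_eq fun p => f p.1.1 p.1.2).symm

variable [∀ v, Fintype (G.neighborSet v)]

theorem tsum_adj_eq_tsum_sum_neighborFinset {α : Type*} [AddCommGroup α] [UniformSpace α]
    [IsUniformAddGroup α] [CompleteSpace α] [T0Space α] {f : V → V → α}
    (hf : Summable fun p : {p : V × V // G.Adj p.1 p.2} => f p.1.1 p.1.2) :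
    ∑' p : {p : V × V // G.Adj p.1 p.2}, f p.1.1 p.1.2 =
      ∑' i, ∑ j ∈ G.neighborFinset i, f i j := by
  let e : (Σ i, G.neighborFinset i) ≃ {p : V × V // G.Adj p.1 p.2} :=
    (Equiv.sigmaCongrRight fun i => Equiv.subtypeEquivRight fun j => G.mem_neighborFinset i j).trans
      (Equiv.subtypeProdEquivSigmaSubtype G.Adj).symm
  rw [← e.tsum_eq]
  exact (Summable.tsum_sigma (e.summable_iff.2 hf)).trans
    (tsum_congr fun i => Finset.tsum_subtype _ (f i))

theorem majority_mul_weighted_sum_pos {d : ℕ} {z : V → V → ℝ} {i : V} (hodd : Odd (G.degree i))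
    (hdeg : G.degree i ≤ d) (hz : ∀ j, G.Adj i j → 0 < z i j)
    (hlegal : ∀ j k, G.Adj i j → G.Adj i k → z i j / z i k < ((d : ℝ) + 1) / ((d : ℝ) - 1))
    {B : V → ℤ} (hB : ∀ j, B j = 1 ∨ B j = -1) :
    0 < ((if 0 < ∑ j ∈ G.neighborFinset i, B j then 1 else -1 : ℤ) : ℝ) *
      ∑ j ∈ G.neighborFinset i, z i j * B j := by
  have hw : ∀ j ∈ G.neighborFinset i, 0 < z i j := fun j hj =>
    hz j ((G.mem_neighborFinset i j).1 hj)
  have hlegal' : ∀ j ∈ G.neighborFinset i, ∀ k ∈ G.neighborFinset i,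
      z i j / z i k < ((d : ℝ) + 1) / ((d : ℝ) - 1) := fun j hj k hk =>
    hlegal j k ((G.mem_neighborFinset i j).1 hj) ((G.mem_neighborFinset i k).1 hk)
  split_ifs with hS
  · simpa using weighted_sum_pos_of_sum_pos hdeg hw hlegal' (fun j _ => hB j) hS
  · have hS' : 0 < ∑ j ∈ G.neighborFinset i, -B j := by
      have := sum_ne_zero_of_pm_one_of_odd_card (fun j _ => hB j) hodd
      rw [sum_neg_distrib]
      omega
    have := weighted_sum_pos_of_sum_pos hdeg hw hlegal'
      (fun j _ => by rcases hB j with h | h <;> simp [h]) hS'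
    simpa [sum_neg_distrib] using this

theorem tsum_weighted_sq_sub_le {z : V → V → ℝ} (hsym : ∀ i j, z i j = z j i)
    (hz : ∀ i j, G.Adj i j → 0 ≤ z i j)
    (hzsum : Summable fun p : {p : V × V // G.Adj p.1 p.2} => z p.1.1 p.1.2)
    {a b c : V → ℝ} (ha : ∀ i, a i = 1 ∨ a i = -1) (hb : ∀ i, b i = 1 ∨ b i = -1)
    (hc : ∀ i, c i = 1 ∨ c i = -1)
    (hstep : ∀ i, 0 ≤ (c i - a i) * ∑ j ∈ G.neighborFinset i, z i j * b j) :
    ∑' p : {p : V × V // G.Adj p.1 p.2}, z p.1.1 p.1.2 * (c p.1.1 - b p.1.2) ^ 2 ≤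
      ∑' p : {p : V × V // G.Adj p.1 p.2}, z p.1.1 p.1.2 * (b p.1.1 - a p.1.2) ^ 2 := by
  have hsq : ∀ {u v : ℝ}, (u = 1 ∨ u = -1) → (v = 1 ∨ v = -1) → (u - v) ^ 2 ≤ 4 := by
    rintro u v (rfl | rfl) (rfl | rfl) <;> norm_num
  have hsummable : ∀ g : {p : V × V // G.Adj p.1 p.2} → ℝ, (∀ p, g p ^ 2 ≤ 4) →
      Summable fun p => z p.1.1 p.1.2 * g p ^ 2 := fun g hg =>
    (hzsum.mul_left 4).of_nonneg_of_le (fun p => mul_nonneg (hz _ _ p.2) (sq_nonneg _))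
      fun p => by rw [mul_comm 4]; exact mul_le_mul_of_nonneg_left (hg p) (hz _ _ p.2)
  have hswap : ∑' p : {p : V × V // G.Adj p.1 p.2}, z p.1.1 p.1.2 * (b p.1.1 - a p.1.2) ^ 2 =
      ∑' p : {p : V × V // G.Adj p.1 p.2}, z p.1.1 p.1.2 * (b p.1.2 - a p.1.1) ^ 2 :=
    (G.tsum_adj_swap fun i j => z i j * (b i - a j) ^ 2).trans
      (tsum_congr fun p => by rw [hsym])
  have hsq_one : ∀ {u : ℝ}, (u = 1 ∨ u = -1) → u ^ 2 = 1 := by rintro u (rfl | rfl) <;> norm_num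
  have hba := hsummable _ fun p => hsq (hb p.1.2) (ha p.1.1)
  have hcb := hsummable _ fun p => hsq (hc p.1.1) (hb p.1.2)
  rw [hswap, ← sub_nonneg, ← hba.tsum_sub hcb, G.tsum_adj_eq_tsum_sum_neighborFinset
    (f := fun i j => z i j * (b j - a i) ^ 2 - z i j * (c i - b j) ^ 2) (hba.sub hcb)]
  refine tsum_nonneg fun i => ?_
  have hterm : ∀ j, z i j * (b j - a i) ^ 2 - z i j * (c i - b j) ^ 2 =
      2 * ((c i - a i) * (z i j * b j)) := fun j => by
    linear_combination z i j * (hsq_one (ha i) - hsq_one (hc i))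
  rw [sum_congr rfl fun j _ => hterm j, ← mul_sum, ← mul_sum]
  exact mul_nonneg zero_le_two (hstep i)

end SimpleGraph

/-- With a summable `d`-legal edge weighting, the Lyapunov functional
`L_t = (1/4) ∑_{(i,j)∈E} z(i,j)(A^i_{t+1} - A^j_t)^2` (sum over ordered adjacent pairs)
is monotone non-increasing in `t`. -/
theorem stmt_3 {V : Type*} (G : SimpleGraph V) [∀ v : V, Fintype (G.neighborSet v)]
    (d : ℕ) (hd : 3 ≤ d)
    (hodd : ∀ i, Odd (G.degree i)) (hdeg : ∀ i, G.degree i ≤ d)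
    (z : V → V → ℝ) (hsym : ∀ i j, z i j = z j i)
    (hz01 : ∀ i j, G.Adj i j → 0 < z i j ∧ z i j ≤ 1)
    (hlegal : ∀ i j k, G.Adj i j → G.Adj i k →
      z i j / z i k < ((d : ℝ) + 1) / ((d : ℝ) - 1))
    (hzsum : Summable (fun p : {p : V × V // G.Adj p.1 p.2} => z p.1.1 p.1.2))
    (A : ℕ → V → ℤ) (hA0 : ∀ i, A 0 i = 1 ∨ A 0 i = -1)
    (hdyn : ∀ t i, A (t + 1) i =
      if 0 < ∑ j ∈ G.neighborFinset i, A t j then 1 else -1) :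
    Antitone (fun t : ℕ => (1 / 4 : ℝ) * ∑' p : {p : V × V // G.Adj p.1 p.2},
      z p.1.1 p.1.2 * ((A (t + 1) p.1.1 : ℝ) - (A t p.1.2 : ℝ)) ^ 2) := by
  have hpm : ∀ t i, A t i = 1 ∨ A t i = -1 := by
    rintro (_ | t) i
    · exact hA0 i
    · rw [hdyn]; split_ifs <;> simp
  have hpm_real : ∀ t i, (A t i : ℝ) = 1 ∨ (A t i : ℝ) = -1 := fun t i => by
    rcases hpm t i with h | h <;> simp [h]
  refine antitone_nat_of_succ_le fun t => mul_le_mul_of_nonneg_left ?_ (by norm_num)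
  refine G.tsum_weighted_sq_sub_le hsym (fun i j h => (hz01 i j h).1.le) hzsum (hpm_real t)
    (hpm_real (t + 1)) (hpm_real (t + 2)) fun i => ?_
  refine sub_mul_nonneg_of_pm_one (hpm_real t i) (hpm_real (t + 2) i) ?_
  rw [hdyn (t + 1) i]
  exact G.majority_mul_weighted_sum_pos (hodd i) (hdeg i) (fun j h => (hz01 i j h).1)
    (hlegal i) (hpm (t + 1))
end

section
/- Let G be a graph with all degrees odd and bounded by d, admitting a summable d-legal edge weighting. Then under synchronous majority dynamics, for every vertex i there exists T such that A^i_{t+2} = A^i_t for all t ≥ T; i.e., every opinion sequence is eventually periodic with period at most two. -/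
/-!
Goles–Olivos energy argument. The energy `E t = ∑_{i ~ j} z i j * A (t+1) i * A t j` is bounded
by `∑ z`, and `E (t+1) - E t = ∑_i (A (t+2) i - A t i) * h i`, where `h i` is the `z`-weighted
sum of the opinions `A (t+1) j` of the neighbours of `i`. Legality of `z` forces the weighted
majority at `i` to agree with the plain majority `A (t+2) i`, with a margin `c i > 0` independent
of the configuration. Hence every term of the increment is nonnegative and at least `2 * c i`
whenever `A (t+2) i ≠ A t i`; a bounded nondecreasing energy allows only finitely many such steps.
-/

open Finset Filter Topology

theorem Finset.sum_ne_zero_of_odd_card_of_forall_eq_one_or_neg_one {ι : Type*} {s : Finset ι}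
    {a : ι → ℤ} (hs : Odd #s) (ha : ∀ j ∈ s, a j = 1 ∨ a j = -1) : ∑ j ∈ s, a j ≠ 0 := by
  intro hsum
  have hmod : ∑ j ∈ s, a j ≡ ∑ _j ∈ s, 1 [ZMOD 2] :=
    Int.ModEq.sum fun j hj => by rcases ha j hj with h | h <;> simp [h, Int.ModEq]
  rw [hsum, sum_const, nsmul_eq_mul, mul_one] at hmod
  exact Int.not_even_iff_odd.mpr (by exact_mod_cast hs) (Int.even_iff.mpr hmod.symm)

theorem Finset.le_sum_mul_of_sum_pos {ι : Type*} {s : Finset ι} {w : ι → ℝ} {a : ι → ℤ}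
    {lo hi : ℝ} (hlo : 0 ≤ lo) (hlohi : lo ≤ hi) (hw : ∀ j ∈ s, lo ≤ w j ∧ w j ≤ hi)
    (ha : ∀ j ∈ s, a j = 1 ∨ a j = -1) (hpos : 0 < ∑ j ∈ s, a j) :
    ((#s + 1) * lo - (#s - 1) * hi) / 2 ≤ ∑ j ∈ s, w j * a j := by
  set P := s.filter (a · = 1)
  set M := s.filter (¬a · = 1)
  have haM : ∀ j ∈ M, a j = -1 := fun j hj => by
    obtain ⟨hjs, hj⟩ := mem_filter.mp hj
    exact (ha j hjs).resolve_left hj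
  have hcard : (#P : ℝ) + #M = #s := by exact_mod_cast card_filter_add_card_filter_not _
  have hPM : (#M : ℝ) + 1 ≤ #P := by
    have hsplit : ∑ j ∈ s, a j = #P - #M := by
      rw [← sum_filter_add_sum_filter_not s (a · = 1),
        sum_congr rfl fun j hj => (mem_filter.mp hj).2, sum_congr rfl haM]
      simp only [sum_const, nsmul_eq_mul, mul_one, mul_neg, sub_eq_add_neg]
      rfl
    have : (#M : ℤ) + 1 ≤ #P := by omega
    exact_mod_cast this
  have hP : #P * lo ≤ ∑ j ∈ P, w j := by
    simpa using card_nsmul_le_sum P w lo fun j hj => (hw j (filter_subset _ _ hj)).1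
  have hM : ∑ j ∈ M, w j ≤ #M * hi := by
    simpa using sum_le_card_nsmul M w hi fun j hj => (hw j (filter_subset _ _ hj)).2
  have hsplit : ∑ j ∈ s, w j * a j = ∑ j ∈ P, w j - ∑ j ∈ M, w j := by
    rw [← sum_filter_add_sum_filter_not s (a · = 1), sub_eq_add_neg, ← sum_neg_distrib]
    congr 1 <;> refine sum_congr rfl fun j hj => ?_
    · simp [(mem_filter.mp hj).2]
    · simp [haM j hj]
  rw [hsplit]
  nlinarith [mul_nonneg (sub_nonneg.mpr hPM) (add_nonneg hlo (hlo.trans hlohi))]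

theorem Finset.exists_pos_le_majority_mul_sum {ι : Type*} {s : Finset ι} (hs : Odd #s)
    {w : ι → ℝ} (hw : ∀ j ∈ s, ∀ k ∈ s, (#s - 1) * w j < (#s + 1) * w k) :
    ∃ c > 0, ∀ a : ι → ℤ, (∀ j ∈ s, a j = 1 ∨ a j = -1) →
      c ≤ ((if 0 < ∑ j ∈ s, a j then 1 else -1 : ℤ) : ℝ) * ∑ j ∈ s, w j * a j := by
  have hne : s.Nonempty := card_pos.mp hs.pos
  obtain ⟨jlo, hjlo, hlo⟩ := exists_mem_eq_inf' hne w
  obtain ⟨jhi, hjhi, hhi⟩ := exists_mem_eq_sup' hne w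
  have hbounds : ∀ j ∈ s, s.inf' hne w ≤ w j ∧ w j ≤ s.sup' hne w :=
    fun j hj => ⟨inf'_le w hj, le_sup' w hj⟩
  have hlo_pos : 0 < s.inf' hne w := by
    rw [hlo]; linarith [hw jlo hjlo jlo hjlo]
  have hlohi : s.inf' hne w ≤ s.sup' hne w := (inf'_le w hjlo).trans (le_sup' w hjlo)
  refine ⟨((#s + 1) * s.inf' hne w - (#s - 1) * s.sup' hne w) / 2, ?_, fun a ha => ?_⟩
  · rw [hlo, hhi]; linarith [hw jhi hjhi jlo hjlo]
  split_ifs with hpos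
  · simpa using le_sum_mul_of_sum_pos hlo_pos.le hlohi hbounds ha hpos
  · have hneg : 0 < ∑ j ∈ s, -a j := by
      rw [sum_neg_distrib]
      exact neg_pos.mpr ((not_lt.mp hpos).lt_of_ne
        (sum_ne_zero_of_odd_card_of_forall_eq_one_or_neg_one hs ha))
    have := le_sum_mul_of_sum_pos hlo_pos.le hlohi hbounds
      (fun j hj => (ha j hj).symm.imp (by simp [·]) (by simp [·])) hneg
    simpa using this

theorem sub_one_mul_lt_add_one_mul_of_div_lt {m d x y : ℝ} (hm : 1 ≤ m) (hmd : m ≤ d)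
    (hd : 1 < d) (hy : 0 < y) (h : x / y < (d + 1) / (d - 1)) :
    (m - 1) * x < (m + 1) * y := by
  rw [div_lt_div_iff₀ hy (by linarith)] at h
  have key : 0 < (d - 1) * ((m + 1) * y - (m - 1) * x) := by
    have hsplit : (d - 1) * ((m + 1) * y - (m - 1) * x) =
        (m - 1) * ((d + 1) * y - x * (d - 1)) + 2 * y * (d - m) := by ring
    rw [hsplit]
    rcases hm.eq_or_lt with rfl | hm
    · nlinarith
    · nlinarith [mul_pos (sub_pos.mpr hm) (sub_pos.mpr h)]
  exact sub_pos.mp (pos_of_mul_pos_right key (by linarith))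

theorem two_mul_le_sub_mul_of_ne {a b f c : ℝ} (ha : a = 1 ∨ a = -1) (hb : b = 1 ∨ b = -1)
    (hab : a ≠ b) (hc : c ≤ a * f) : 2 * c ≤ (a - b) * f := by
  have : b = -a := by
    rcases ha with rfl | rfl <;> rcases hb with rfl | rfl <;>
      first | exact absurd rfl hab | norm_num
  rw [this]; linarith

theorem abs_mul_mul_le_of_abs_le_one {a b c : ℝ} (hb : |b| ≤ 1) (hc : |c| ≤ 1) :
    |a * b * c| ≤ |a| := by
  rw [abs_mul, abs_mul]
  calc |a| * |b| * |c| ≤ |a| * 1 * 1 := by gcongr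
    _ = |a| := by ring

theorem tendsto_zero_of_le_sub_of_le {D E : ℕ → ℝ} {C : ℝ} (hD : ∀ t, 0 ≤ D t)
    (hDE : ∀ t, D t ≤ E (t + 1) - E t) (hE : ∀ t, E t ≤ C) : Tendsto D atTop (𝓝 0) := by
  refine (summable_of_sum_range_le (c := C - E 0) hD fun n => ?_).tendsto_atTop_zero
  calc ∑ t ∈ range n, D t ≤ ∑ t ∈ range n, (E (t + 1) - E t) := sum_le_sum fun t _ => hDE t
    _ = E n - E 0 := sum_range_sub E n
    _ ≤ C - E 0 := by linarith [hE n]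

namespace SimpleGraph

variable {V : Type*} (G : SimpleGraph V)

noncomputable def energy (z : V → V → ℝ) (x y : V → ℝ) : ℝ :=
  ∑' p : {p : V × V // G.Adj p.1 p.2}, z p.1.1 p.1.2 * x p.1.1 * y p.1.2

variable {G} {z : V → V → ℝ} {x y : V → ℝ}

theorem summable_energy
    (hz : Summable fun p : {p : V × V // G.Adj p.1 p.2} => z p.1.1 p.1.2)
    (hx : ∀ i, |x i| ≤ 1) (hy : ∀ i, |y i| ≤ 1) :
    Summable fun p : {p : V × V // G.Adj p.1 p.2} => z p.1.1 p.1.2 * x p.1.1 * y p.1.2 :=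
  hz.abs.of_norm_bounded fun _ => abs_mul_mul_le_of_abs_le_one (hx _) (hy _)

theorem energy_le_tsum_abs
    (hz : Summable fun p : {p : V × V // G.Adj p.1 p.2} => z p.1.1 p.1.2)
    (hx : ∀ i, |x i| ≤ 1) (hy : ∀ i, |y i| ≤ 1) :
    G.energy z x y ≤ ∑' p : {p : V × V // G.Adj p.1 p.2}, |z p.1.1 p.1.2| :=
  (summable_energy hz hx hy).tsum_le_tsum
    (fun _ => (le_abs_self _).trans (abs_mul_mul_le_of_abs_le_one (hx _) (hy _))) hz.abs

theorem energy_comm (hsym : ∀ i j, z i j = z j i) : G.energy z x y = G.energy z y x := by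
  let swap : {p : V × V // G.Adj p.1 p.2} ≃ {p : V × V // G.Adj p.1 p.2} :=
    (Equiv.prodComm V V).subtypeEquiv fun p => G.adj_comm p.1 p.2
  rw [energy, ← swap.tsum_eq]
  refine tsum_congr fun p => ?_
  obtain ⟨⟨i, j⟩, _⟩ := p
  change z j i * x j * y i = z i j * y i * x j
  rw [hsym]; ring

variable (G) [∀ v, Fintype (G.neighborSet v)]

def localField (z : V → V → ℝ) (x : V → ℝ) (i : V) : ℝ :=
  ∑ j ∈ G.neighborFinset i, z i j * x j

variable {G}

theorem hasSum_sum_neighborFinset {f : V → V → ℝ} {a : ℝ}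
    (hf : HasSum (fun p : {p : V × V // G.Adj p.1 p.2} => f p.1.1 p.1.2) a) :
    HasSum (fun i => ∑ j ∈ G.neighborFinset i, f i j) a := by
  rw [← (Equiv.subtypeProdEquivSigmaSubtype G.Adj).symm.hasSum_iff] at hf
  refine hf.sigma fun i => ?_
  rw [sum_subtype (p := (· ∈ G.neighborSet i)) _ (fun j => mem_neighborFinset G i j)]
  exact hasSum_fintype (fun j : G.neighborSet i => f i j)

theorem hasSum_sub_mul_localField {x' : V → ℝ}
    (hz : Summable fun p : {p : V × V // G.Adj p.1 p.2} => z p.1.1 p.1.2)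
    (hx' : ∀ i, |x' i| ≤ 1) (hx : ∀ i, |x i| ≤ 1) (hy : ∀ i, |y i| ≤ 1) :
    HasSum (fun i => (x' i - x i) * G.localField z y i) (G.energy z x' y - G.energy z x y) := by
  have := hasSum_sum_neighborFinset (f := fun i j => z i j * x' i * y j - z i j * x i * y j)
    ((summable_energy hz hx' hy).hasSum.sub (summable_energy hz hx hy).hasSum)
  refine this.congr_fun fun i => ?_
  rw [localField, mul_sum]
  exact sum_congr rfl fun j _ => by ring

theorem eventually_add_two_eq_of_margin (hsym : ∀ i j, z i j = z j i)
    (hz : Summable fun p : {p : V × V // G.Adj p.1 p.2} => z p.1.1 p.1.2)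
    {x : ℕ → V → ℝ} (hx : ∀ t i, x t i = 1 ∨ x t i = -1)
    (hmargin : ∀ i, ∃ c > 0, ∀ t, c ≤ x (t + 1) i * G.localField z (x t) i) (i : V) :
    ∀ᶠ t in atTop, x (t + 2) i = x t i := by
  have habs : ∀ t i, |x t i| ≤ 1 := fun t i => by rcases hx t i with h | h <;> simp [h]
  set D : ℕ → V → ℝ := fun t j => (x (t + 2) j - x t j) * G.localField z (x (t + 1)) j
  have hD_jump : ∀ t j c, (∀ s, c ≤ x (s + 1) j * G.localField z (x s) j) →
      x (t + 2) j ≠ x t j → 2 * c ≤ D t j :=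
    fun t j c hc hne => two_mul_le_sub_mul_of_ne (hx _ _) (hx _ _) hne (hc (t + 1))
  have hD_nonneg : ∀ t j, 0 ≤ D t j := by
    intro t j
    by_cases h : x (t + 2) j = x t j
    · simp [D, h]
    · obtain ⟨c, hc, hcj⟩ := hmargin j
      linarith [hD_jump t j c hcj h]
  have hD_hasSum : ∀ t, HasSum (D t)
      (G.energy z (x (t + 2)) (x (t + 1)) - G.energy z (x (t + 1)) (x t)) := by
    intro t
    rw [energy_comm (x := x (t + 1)) hsym]
    exact hasSum_sub_mul_localField hz (habs _) (habs _) (habs _)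
  have hlim : Tendsto (fun t => D t i) atTop (𝓝 0) :=
    tendsto_zero_of_le_sub_of_le (E := fun t => G.energy z (x (t + 1)) (x t))
      (fun t => hD_nonneg t i) (fun t => le_hasSum (hD_hasSum t) i fun j _ => hD_nonneg t j)
      (fun t => energy_le_tsum_abs hz (habs _) (habs _))
  obtain ⟨c, hc, hci⟩ := hmargin i
  filter_upwards [hlim.eventually_lt_const (by linarith : (0 : ℝ) < 2 * c)] with t ht
  by_contra hne
  exact (hD_jump t i c hci hne).not_gt ht

end SimpleGraph

/-- If a graph with odd degrees bounded by `d` admits a summable `d`-legal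
edge weighting, then under synchronous majority dynamics every opinion sequence is
eventually periodic with period at most two. -/
theorem stmt_4 {V : Type*} (G : SimpleGraph V) [∀ v : V, Fintype (G.neighborSet v)]
    (d : ℕ) (hd : 3 ≤ d)
    (hodd : ∀ i, Odd (G.degree i)) (hdeg : ∀ i, G.degree i ≤ d)
    (z : V → V → ℝ) (hsym : ∀ i j, z i j = z j i)
    (hz01 : ∀ i j, G.Adj i j → 0 < z i j ∧ z i j ≤ 1)
    (hlegal : ∀ i j k, G.Adj i j → G.Adj i k →
      z i j / z i k < ((d : ℝ) + 1) / ((d : ℝ) - 1))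
    (hzsum : Summable (fun p : {p : V × V // G.Adj p.1 p.2} => z p.1.1 p.1.2))
    (A : ℕ → V → ℤ) (hA0 : ∀ i, A 0 i = 1 ∨ A 0 i = -1)
    (hdyn : ∀ t i, A (t + 1) i =
      if 0 < ∑ j ∈ G.neighborFinset i, A t j then 1 else -1) :
    ∀ i : V, ∃ T : ℕ, ∀ t : ℕ, T ≤ t → A (t + 2) i = A t i := by
  have hA : ∀ t j, A t j = 1 ∨ A t j = -1 := by
    rintro (_ | t) j
    · exact hA0 j
    · rw [hdyn]; split_ifs <;> simp
  have hmargin : ∀ i, ∃ c > 0, ∀ t,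
      c ≤ (A (t + 1) i : ℝ) * G.localField z (fun j => (A t j : ℝ)) i := by
    intro i
    have hw : ∀ j ∈ G.neighborFinset i, ∀ k ∈ G.neighborFinset i,
        (#(G.neighborFinset i) - 1 : ℝ) * z i j < (#(G.neighborFinset i) + 1) * z i k := by
      intro j hj k hk
      rw [G.mem_neighborFinset] at hj hk
      exact sub_one_mul_lt_add_one_mul_of_div_lt (by exact_mod_cast (hodd i).pos)
        (by exact_mod_cast hdeg i) (by norm_cast; omega) (hz01 i k hk).1 (hlegal i j k hj hk)
    obtain ⟨c, hc, hci⟩ := exists_pos_le_majority_mul_sum (hodd i) hw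
    exact ⟨c, hc, fun t => by rw [hdyn]; exact hci _ fun j _ => hA t j⟩
  intro i
  obtain ⟨T, hT⟩ := eventually_atTop.mp <| G.eventually_add_two_eq_of_margin hsym hzsum
    (x := fun t j => (A t j : ℝ)) (fun t j => by rcases hA t j with h | h <;> simp [h]) hmargin i
  exact ⟨T, fun t ht => by exact_mod_cast hT t ht⟩
end

section
/- Let G be a d-bounded degree graph with odd degrees, i a vertex, and r0 an integer such that ((d+1)/(d-1)) · 2d · ∑_{r > r0} ((d-1)/(d+1))^r n_r(G,i) < 1. If at some time T in synchronous majority dynamics all vertices j within distance r0+2 of i satisfy A^j_T = A^i_T, then A^i_t = A^i_T for all t > T. -/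
/-!
Run bootstrap percolation with majority threshold, seeded with all vertices at distance more than
`r0 + 2` from `i`. A vertex that is never infected has, its degree being odd, a strict majority of
never-infected neighbours; all of these agree with `i` at time `T`, so they keep that opinion
forever. It remains to see that `i` is never infected. If it were, push a unit of mass from `i`
backwards through the infection, each vertex splitting what it receives evenly among the
neighbours that infected it. A vertex receives mass only from its other neighbours, fewer than
`x = (d - 1) / (d + 1)` times the infecting ones, so the mass per edge at distance `r` from `i`
is at most `x ^ r`. All the mass ends on the sphere of radius `r0 + 3`, hence
`1 ≤ x ^ (r0 + 2) * d * n_{r0+3}`, which the hypothesis on `r0` forbids.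
-/

open Finset

section BackwardFlow

variable {V : Type*} [DecidableEq V]

/-- `f u` is the mass that `u` sends along each edge to `P u`, and `b u` the mass injected at `u`:
everything arriving at `u` is split evenly among `P u`. -/
def IsBackwardFlow (D : Finset V) (P : V → Finset V) (b f : V → ℝ) : Prop :=
  ∀ u ∈ D, #(P u) * f u = b u + ∑ w ∈ D with u ∈ P w, f w

theorem exists_isBackwardFlow (D : Finset V) (P : V → Finset V) (σ : V → ℕ)
    (hP : ∀ u ∈ D, (P u).Nonempty) (hσ : ∀ u ∈ D, ∀ s ∈ P u, σ s < σ u) (b : V → ℝ) :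
    ∃ f, IsBackwardFlow D P b f := by
  induction D using Finset.induction_on_max_value σ generalizing b with
  | empty => exact ⟨0, by simp [IsBackwardFlow]⟩
  | insert a D ha hmax ih =>
    -- `a` has maximal rank, so nothing flows into it: it only passes its own mass on to `P a`.
    have hPa : 0 < #(P a) := (hP a (mem_insert_self a D)).card_pos
    set fa := b a / #(P a)
    obtain ⟨f, hf⟩ := ih (fun u hu => hP u (mem_insert_of_mem hu))
      (fun u hu => hσ u (mem_insert_of_mem hu)) (b + fun u => if u ∈ P a then fa else 0)
    have hnot : ∀ w ∈ insert a D, a ∉ P w := fun w hw haw => by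
      have := hσ w hw a haw
      rcases mem_insert.1 hw with rfl | hw
      · omega
      · exact absurd (hmax w hw) (by omega)
    refine ⟨Function.update f a fa, fun u hu => ?_⟩
    rw [filter_insert]
    rcases mem_insert.1 hu with rfl | hu
    · rw [if_neg (hnot u hu), filter_false_of_mem fun w hw => hnot w (mem_insert_of_mem hw),
        Function.update_self, sum_empty, add_zero, mul_div_cancel₀ _ (by positivity)]
    · have hsum : ∑ w ∈ D with u ∈ P w, Function.update f a fa w =
          ∑ w ∈ D with u ∈ P w, f w :=
        sum_congr rfl fun w hw =>
          Function.update_of_ne (ne_of_mem_of_not_mem (mem_filter.1 hw).1 ha) _ _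
      rw [Function.update_of_ne (ne_of_mem_of_not_mem hu ha), hf u hu]
      split_ifs with h
      · rw [sum_insert fun h' => ha (mem_filter.1 h').1, Function.update_self, hsum,
          Pi.add_apply, if_pos h]
        ring
      · simp [hsum, h]

theorem IsBackwardFlow.sum_card_sdiff_mul {D : Finset V} {P : V → Finset V} {b f : V → ℝ}
    (hf : IsBackwardFlow D P b f) : ∑ w ∈ D, #(P w \ D) * f w = ∑ u ∈ D, b u := by
  have hin : ∑ u ∈ D, ∑ w ∈ D with u ∈ P w, f w = ∑ w ∈ D, #(P w ∩ D) * f w := by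
    simp_rw [sum_filter]
    rw [sum_comm]
    refine sum_congr rfl fun w _ => ?_
    rw [← sum_filter, sum_const, nsmul_eq_mul, filter_mem_eq_inter, inter_comm]
  have hsplit : ∑ u ∈ D, #(P u) * f u =
      ∑ w ∈ D, #(P w \ D) * f w + ∑ w ∈ D, #(P w ∩ D) * f w := by
    rw [← sum_add_distrib]
    refine sum_congr rfl fun w _ => ?_
    rw [← add_mul, ← Nat.cast_add, card_sdiff_add_card_inter]
  have hbalance := sum_congr rfl hf
  rw [sum_add_distrib, hin, hsplit] at hbalance
  linarith

end BackwardFlow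

namespace SimpleGraph

variable {V : Type*} {G : SimpleGraph V}

theorem dist_le_dist_add_one_of_adj {u v w : V} (h : G.Adj v w) :
    G.dist u w ≤ G.dist u v + 1 := by
  rcases h.diff_dist_adj (u := u) with h | h | h <;> omega

theorem Connected.finite_setOf_dist_le [G.LocallyFinite] (hconn : G.Connected) (i : V) :
    ∀ r, {v | G.dist i v ≤ r}.Finite
  | 0 => (Set.finite_singleton i).subset fun v hv =>
    (hconn.dist_eq_zero_iff.1 (Nat.le_zero.1 hv)).symm
  | r + 1 => by
    refine ((hconn.finite_setOf_dist_le i r).biUnion fun u _ =>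
      (G.neighborSet u).toFinite.insert u).subset fun v hv => ?_
    obtain ⟨p, hp⟩ := hconn.exists_walk_length_eq_dist v i
    cases p with
    | nil => exact Set.mem_biUnion (by simp : i ∈ {v | G.dist i v ≤ r}) (Set.mem_insert i _)
    | @cons _ u _ hvu q =>
      refine Set.mem_biUnion (x := u) ?_ (Set.mem_insert_of_mem _ hvu.symm)
      have := G.dist_le q
      rw [Walk.length_cons, dist_comm] at hp
      change G.dist i v ≤ r + 1 at hv
      change G.dist i u ≤ r
      rw [dist_comm]
      omega

variable (G) [G.LocallyFinite]

def majorityStep (A : Set V) : Set V :=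
  A ∪ {v | ∃ S : Finset V, S ⊆ G.neighborFinset v ∧ ↑S ⊆ A ∧ G.degree v < 2 * #S}

def bootstrap (A : Set V) (k : ℕ) : Set V := (G.majorityStep)^[k] A

theorem bootstrap_succ (A : Set V) (k : ℕ) :
    G.bootstrap A (k + 1) = G.majorityStep (G.bootstrap A k) :=
  Function.iterate_succ_apply' _ _ _

theorem bootstrap_mono (A : Set V) : Monotone (G.bootstrap A) :=
  monotone_nat_of_le_succ fun k => by rw [bootstrap_succ]; exact Set.subset_union_left

noncomputable def stage (A : Set V) (v : V) : ℕ := sInf {k | v ∈ G.bootstrap A k}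

variable {G}

theorem mem_bootstrap_stage {A : Set V} {v : V} {k : ℕ} (h : v ∈ G.bootstrap A k) :
    v ∈ G.bootstrap A (G.stage A v) :=
  Nat.sInf_mem (s := {k | v ∈ G.bootstrap A k}) ⟨k, h⟩

theorem stage_le {A : Set V} {v : V} {k : ℕ} (h : v ∈ G.bootstrap A k) : G.stage A v ≤ k :=
  Nat.sInf_le h

theorem exists_majority_of_mem_bootstrap {A : Set V} {v : V} {k : ℕ}
    (h : v ∈ G.bootstrap A k) (hv : v ∉ A) :
    ∃ S : Finset V, S ⊆ G.neighborFinset v ∧ G.degree v < 2 * #S ∧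
      ∀ s ∈ S, s ∈ G.bootstrap A k ∧ G.stage A s < G.stage A v := by
  have hstage := mem_bootstrap_stage h
  obtain ⟨m, hm⟩ : ∃ m, G.stage A v = m + 1 := by
    refine Nat.exists_eq_add_one.2 (Nat.pos_of_ne_zero fun h0 => hv ?_)
    rwa [h0] at hstage
  rw [hm, bootstrap_succ] at hstage
  rcases hstage with hm' | ⟨S, hSv, hSA, hS⟩
  · exact absurd (stage_le hm') (by omega)
  refine ⟨S, hSv, hS, fun s hs =>
    ⟨bootstrap_mono G A ?_ (hSA hs), hm ▸ Nat.lt_succ_of_le (stage_le (hSA hs))⟩⟩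
  have := stage_le h
  omega

open Classical in
theorem degree_lt_two_mul_card_compl_bootstrap {A : Set V} {v : V} (hodd : Odd (G.degree v))
    (hv : v ∉ ⋃ k, G.bootstrap A k) :
    G.degree v < 2 * #{w ∈ G.neighborFinset v | w ∈ (⋃ k, G.bootstrap A k)ᶜ} := by
  set S := {w ∈ G.neighborFinset v | w ∈ ⋃ k, G.bootstrap A k}
  have hS : ↑S ⊆ G.bootstrap A (S.sup (G.stage A)) := fun s hs => by
    obtain ⟨k, hk⟩ := Set.mem_iUnion.1 (mem_filter.1 hs).2
    exact bootstrap_mono G A (le_sup hs) (mem_bootstrap_stage hk)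
  have hle : ¬ G.degree v < 2 * #S := fun hlt => by
    refine hv (Set.mem_iUnion.2 ⟨S.sup (G.stage A) + 1, ?_⟩)
    rw [bootstrap_succ]
    exact Or.inr ⟨S, filter_subset _ _, hS, hlt⟩
  have hsplit :
      #S + #{w ∈ G.neighborFinset v | w ∈ (⋃ k, G.bootstrap A k)ᶜ} = G.degree v := by
    rw [← card_neighborFinset_eq_degree]
    convert card_filter_add_card_filter_not (s := G.neighborFinset v) (· ∈ ⋃ k, G.bootstrap A k)
  obtain ⟨l, hl⟩ := hodd
  omega

variable (G) in
def IsMajorityDynamics (A : ℕ → V → ℤ) : Prop :=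
  ∀ t v, A (t + 1) v = if 0 < ∑ j ∈ G.neighborFinset v, A t j then 1 else -1

theorem IsMajorityDynamics.eq_one_or_eq_neg_one {A : ℕ → V → ℤ} (hA : G.IsMajorityDynamics A)
    (hA0 : ∀ v, A 0 v = 1 ∨ A 0 v = -1) : ∀ t v, A t v = 1 ∨ A t v = -1
  | 0 => hA0
  | t + 1 => fun v => by rw [hA t v]; split_ifs <;> simp

theorem IsMajorityDynamics.eq_of_majority_mem {A : ℕ → V → ℤ} (hA : G.IsMajorityDynamics A)
    (hval : ∀ t v, A t v = 1 ∨ A t v = -1) {B : Set V} [DecidablePred (· ∈ B)]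
    (hB : ∀ v ∈ B, G.degree v < 2 * #{w ∈ G.neighborFinset v | w ∈ B})
    {a : ℤ} (ha : a = 1 ∨ a = -1) {T : ℕ} (hT : ∀ v ∈ B, A T v = a) :
    ∀ s, ∀ v ∈ B, A (T + s) v = a
  | 0 => hT
  | s + 1 => fun v hv => by
    have ih := hA.eq_of_majority_mem hval hB ha hT s
    have haa : a * a = 1 := by rcases ha with rfl | rfl <;> rfl
    have hin : ∑ j ∈ G.neighborFinset v with j ∈ B, a * A (T + s) j =
        #{w ∈ G.neighborFinset v | w ∈ B} := by
      rw [sum_congr rfl fun j hj => by rw [ih j (mem_filter.1 hj).2, haa]]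
      simp
    have hout : -(#{w ∈ G.neighborFinset v | w ∉ B} : ℤ) ≤
        ∑ j ∈ G.neighborFinset v with j ∉ B, a * A (T + s) j := calc
      _ = ∑ j ∈ G.neighborFinset v with j ∉ B, (-1 : ℤ) := by simp
      _ ≤ _ := sum_le_sum fun j _ => by
        rcases ha with rfl | rfl <;> rcases hval (T + s) j with h | h <;> simp [h]
    have hcard := card_filter_add_card_filter_not (s := G.neighborFinset v) (· ∈ B)
    rw [card_neighborFinset_eq_degree] at hcard
    have hpos : 0 < a * ∑ j ∈ G.neighborFinset v, A (T + s) j := by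
      rw [mul_sum, ← sum_filter_add_sum_filter_not _ (· ∈ B), hin]
      have := hB v hv
      omega
    rw [← add_assoc, hA]
    rcases ha with rfl | rfl <;> simp at hpos ⊢ <;> omega

variable (G)

section

variable [DecidableEq V]

theorem card_le_mul_card_of_subset_sdiff {x : ℝ} (hx0 : 0 ≤ x)
    (hx : ∀ v, (G.degree v : ℝ) - 1 ≤ x * (G.degree v + 1)) {u : V} {S W : Finset V}
    (hS : S ⊆ G.neighborFinset u) (hW : W ⊆ G.neighborFinset u \ S)
    (hmaj : G.degree u < 2 * #S) : (#W : ℝ) ≤ x * #S := by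
  have hcard : #W + #S ≤ G.degree u := by
    rw [← card_neighborFinset_eq_degree, ← card_sdiff_add_card_eq_card hS]
    exact Nat.add_le_add_right (card_le_card hW) _
  have hcard' : (#W : ℝ) + #S ≤ G.degree u := by exact_mod_cast hcard
  have hmaj' : (G.degree u : ℝ) + 1 ≤ 2 * #S := by exact_mod_cast hmaj
  nlinarith [hx u, mul_le_mul_of_nonneg_left hmaj' hx0]

theorem filter_mem_subset_neighborFinset_sdiff {D : Finset V} {P : V → Finset V} {σ : V → ℕ}
    (hPG : ∀ u ∈ D, P u ⊆ G.neighborFinset u) (hσ : ∀ u ∈ D, ∀ s ∈ P u, σ s < σ u) {u : V}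
    (hu : u ∈ D) : {w ∈ D | u ∈ P w} ⊆ G.neighborFinset u \ P u := fun w hw => by
  obtain ⟨hwD, huw⟩ := mem_filter.1 hw
  refine mem_sdiff.2 ⟨(G.mem_neighborFinset u w).2 ((G.mem_neighborFinset w u).1
    (hPG w hwD huw)).symm, fun hwu => ?_⟩
  have := hσ u hu w hwu
  have := hσ w hwD u huw
  omega

/-- Mass reaches `u` only from neighbours outside `P u`, fewer than `x * #(P u)` of them, each at
distance at least `dist i u - 1` from `i`. -/
theorem _root_.IsBackwardFlow.le_pow_dist {D : Finset V} {P : V → Finset V} {σ : V → ℕ}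
    {f : V → ℝ} {i : V} {x : ℝ} (hx0 : 0 ≤ x) (hx1 : x ≤ 1)
    (hx : ∀ v, (G.degree v : ℝ) - 1 ≤ x * (G.degree v + 1))
    (hf : IsBackwardFlow D P (Pi.single i 1) f)
    (hPG : ∀ u ∈ D, P u ⊆ G.neighborFinset u) (hmaj : ∀ u ∈ D, G.degree u < 2 * #(P u))
    (hσ : ∀ u ∈ D, ∀ s ∈ P u, σ s < σ u) (hσi : ∀ u ∈ D, σ u ≤ σ i) :
    ∀ u ∈ D, f u ≤ x ^ G.dist i u := by
  intro u hu
  induction hn : σ i - σ u using Nat.strong_induction_on generalizing u with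
  | _ n ih =>
  have hPu : (1 : ℝ) ≤ #(P u) := by
    have := hmaj u hu
    exact_mod_cast (by omega : 1 ≤ #(P u))
  by_cases hui : u = i
  · subst hui
    have hmass := hf u hu
    rw [Pi.single_eq_same, filter_false_of_mem fun w hw huw => by
      have := hσ w hw u huw; have := hσi w hw; omega, sum_empty, add_zero] at hmass
    rw [dist_self, pow_zero]
    exact le_of_mul_le_mul_left (by rwa [hmass, mul_one]) (by linarith)
  have hfW : ∀ w ∈ D, u ∈ P w → f w ≤ x ^ (G.dist i u - 1) := fun w hwD huw => by
    have hlt := hσ w hwD u huw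
    refine (ih _ (by have := hσi w hwD; omega) w hwD rfl).trans
      (pow_le_pow_of_le_one hx0 hx1 ?_)
    have := dist_le_dist_add_one_of_adj (u := i) ((G.mem_neighborFinset w u).1 (hPG w hwD huw))
    omega
  have hmass : #(P u) * f u ≤ #(P u) * x ^ G.dist i u := calc
    #(P u) * f u = ∑ w ∈ D with u ∈ P w, f w := by
      rw [hf u hu, Pi.single_eq_of_ne hui, zero_add]
    _ ≤ #{w ∈ D | u ∈ P w} * x ^ (G.dist i u - 1) := by
      rw [← nsmul_eq_mul, ← sum_const]
      exact sum_le_sum fun w hw => hfW w (mem_filter.1 hw).1 (mem_filter.1 hw).2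
    _ ≤ x * #(P u) * x ^ (G.dist i u - 1) := by
      gcongr
      exact G.card_le_mul_card_of_subset_sdiff hx0 hx (hPG u hu)
        (G.filter_mem_subset_neighborFinset_sdiff hPG hσ hu) (hmaj u hu)
    _ ≤ #(P u) * x ^ G.dist i u := by
      rw [mul_comm x, mul_assoc, ← pow_succ']
      exact mul_le_mul_of_nonneg_left (pow_le_pow_of_le_one hx0 hx1 (by omega)) (by linarith)
  exact le_of_mul_le_mul_left hmass (by linarith)

theorem sum_card_sdiff_le_sum_degree {D Bd : Finset V} {P : V → Finset V}
    (hPG : ∀ w ∈ D, P w ⊆ G.neighborFinset w) (hBd : ∀ w ∈ D, P w \ D ⊆ Bd) :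
    ∑ w ∈ D, #(P w \ D) ≤ ∑ j ∈ Bd, G.degree j := calc
  ∑ w ∈ D, #(P w \ D) ≤ ∑ w ∈ D, #(Bd.bipartiteAbove (fun w s => s ∈ P w) w) :=
    sum_le_sum fun w hw => card_le_card fun s hs =>
      mem_filter.2 ⟨hBd w hw hs, (mem_sdiff.1 hs).1⟩
  _ = ∑ j ∈ Bd, #(D.bipartiteBelow (fun w s => s ∈ P w) j) :=
    sum_card_bipartiteAbove_eq_sum_card_bipartiteBelow _
  _ ≤ ∑ j ∈ Bd, G.degree j := sum_le_sum fun j _ => by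
    rw [← card_neighborFinset_eq_degree]
    refine card_le_card fun w hw => ?_
    obtain ⟨hwD, hjw⟩ := mem_filter.1 hw
    exact (G.mem_neighborFinset j w).2 ((G.mem_neighborFinset w j).1 (hPG w hwD hjw)).symm

theorem _root_.IsBackwardFlow.one_le_pow_mul_sum_degree {D Bd : Finset V} {P : V → Finset V}
    {f : V → ℝ} {i : V} {x : ℝ} {R : ℕ} (hx0 : 0 ≤ x)
    (hf : IsBackwardFlow D P (Pi.single i 1) f) (hiD : i ∈ D)
    (hPG : ∀ w ∈ D, P w ⊆ G.neighborFinset w) (hBd : ∀ w ∈ D, P w \ D ⊆ Bd)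
    (hfR : ∀ w ∈ D, (P w \ D).Nonempty → f w ≤ x ^ R) :
    1 ≤ x ^ R * ∑ j ∈ Bd, (G.degree j : ℝ) := calc
  1 = ∑ w ∈ D, #(P w \ D) * f w := by rw [hf.sum_card_sdiff_mul, sum_pi_single', if_pos hiD]
  _ ≤ ∑ w ∈ D, #(P w \ D) * x ^ R := sum_le_sum fun w hw => by
    rcases (P w \ D).eq_empty_or_nonempty with h | h
    · simp [h]
    · exact mul_le_mul_of_nonneg_left (hfR w hw h) (Nat.cast_nonneg _)
  _ = x ^ R * ∑ w ∈ D, (#(P w \ D) : ℝ) := by rw [← sum_mul, mul_comm]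
  _ ≤ x ^ R * ∑ j ∈ Bd, (G.degree j : ℝ) := by
    gcongr
    exact_mod_cast G.sum_card_sdiff_le_sum_degree hPG hBd

end

theorem one_le_pow_mul_sum_degree_of_mem_bootstrap (hconn : G.Connected) {x : ℝ} (hx0 : 0 ≤ x)
    (hx1 : x ≤ 1) (hx : ∀ v, (G.degree v : ℝ) - 1 ≤ x * (G.degree v + 1)) {i : V} {R k : ℕ}
    {Bd : Finset V} (hBd : {j | G.dist i j = R + 1} ⊆ ↑Bd)
    (hi : i ∈ G.bootstrap {v | R < G.dist i v} k) :
    1 ≤ x ^ R * ∑ j ∈ Bd, (G.degree j : ℝ) := by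
  classical
  set A := {v | R < G.dist i v}
  have hball := hconn.finite_setOf_dist_le i R
  set D := {v ∈ hball.toFinset | v ∈ G.bootstrap A (G.stage A i)}
  have hmemD : ∀ u, u ∈ D ↔ G.dist i u ≤ R ∧ u ∈ G.bootstrap A (G.stage A i) := by
    simp [D]
  have hex : ∀ u ∈ D, ∃ S : Finset V, S ⊆ G.neighborFinset u ∧ G.degree u < 2 * #S ∧
      ∀ s ∈ S, s ∈ G.bootstrap A (G.stage A i) ∧ G.stage A s < G.stage A u := fun u hu =>
    exists_majority_of_mem_bootstrap ((hmemD u).1 hu).2 (by simpa [A] using ((hmemD u).1 hu).1)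
  choose! P hPG hmaj hP using hex
  have hσ : ∀ u ∈ D, ∀ s ∈ P u, G.stage A s < G.stage A u := fun u hu s hs => (hP u hu s hs).2
  obtain ⟨f, hf⟩ := exists_isBackwardFlow D P (G.stage A)
    (fun u hu => card_pos.1 (by have := hmaj u hu; omega)) hσ (Pi.single i 1)
  have hiD : i ∈ D := (hmemD i).2 ⟨by simp, mem_bootstrap_stage hi⟩
  have hbdry : ∀ w ∈ D, ∀ s ∈ P w \ D, G.dist i w = R ∧ G.dist i s = R + 1 := by
    intro w hw s hs
    obtain ⟨hsP, hsD⟩ := mem_sdiff.1 hs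
    have h1 : ¬ G.dist i s ≤ R := fun h => hsD ((hmemD s).2 ⟨h, (hP w hw s hsP).1⟩)
    have h2 := dist_le_dist_add_one_of_adj (u := i) ((G.mem_neighborFinset w s).1 (hPG w hw hsP))
    have h3 := ((hmemD w).1 hw).1
    omega
  refine hf.one_le_pow_mul_sum_degree G hx0 hiD hPG (fun w hw s hs => hBd (hbdry w hw s hs).2)
    fun w hw ⟨s, hs⟩ => ?_
  rw [← (hbdry w hw s hs).1]
  exact hf.le_pow_dist G hx0 hx1 hx hPG hmaj hσ (fun u hu => stage_le ((hmemD u).1 hu).2) w hw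

theorem notMem_iUnion_bootstrap_of_lt_one (hconn : G.Connected) {d : ℕ} (hd : 1 ≤ d)
    (hdeg : ∀ v, G.degree v ≤ d) {i : V} {R : ℕ}
    (h : (d : ℝ) * (((d : ℝ) - 1) / (d + 1)) ^ R * {j | G.dist i j = R + 1}.ncard < 1) :
    i ∉ ⋃ k, G.bootstrap {v | R < G.dist i v} k := fun hi => by
  obtain ⟨k, hk⟩ := Set.mem_iUnion.1 hi
  have hd' : (1 : ℝ) ≤ d := by exact_mod_cast hd
  set x := ((d : ℝ) - 1) / (d + 1)
  have hx0 : 0 ≤ x := div_nonneg (by linarith) (by linarith)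
  have hx : ∀ v, (G.degree v : ℝ) - 1 ≤ x * (G.degree v + 1) := fun v => by
    have : (G.degree v : ℝ) ≤ d := by exact_mod_cast hdeg v
    rw [div_mul_eq_mul_div, le_div_iff₀ (by positivity)]
    nlinarith
  set S := {j | G.dist i j = R + 1}
  have hS : S.Finite := (hconn.finite_setOf_dist_le i (R + 1)).subset fun j hj => le_of_eq hj
  have hbound := G.one_le_pow_mul_sum_degree_of_mem_bootstrap hconn hx0
    (div_le_one_of_le₀ (by linarith) (by linarith)) hx
    (Bd := hS.toFinset) (fun j hj => hS.mem_toFinset.2 hj) hk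
  have hdegsum : ∑ j ∈ hS.toFinset, (G.degree j : ℝ) ≤ S.ncard * d := by
    rw [Set.ncard_eq_toFinset_card _ hS, ← nsmul_eq_mul]
    exact sum_le_card_nsmul _ _ _ fun j _ => by exact_mod_cast hdeg j
  have := mul_le_mul_of_nonneg_left hdegsum (pow_nonneg hx0 R)
  linarith

end SimpleGraph

theorem le_tsum_ite_of_lt {g : ℕ → ℝ} (hg : Summable g) (hg0 : ∀ n, 0 ≤ g n) {r₀ r : ℕ}
    (h : r₀ < r) : g r ≤ ∑' n, if r₀ < n then g n else 0 := by
  have hs : Summable fun n => if r₀ < n then g n else 0 :=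
    hg.of_nonneg_of_le (fun n => by split_ifs <;> simp [hg0 n]) fun n => by
      split_ifs <;> simp [hg0 n]
  simpa [h] using hs.le_tsum r fun n _ => by split_ifs <;> simp [hg0 n]

theorem mul_pow_mul_lt_one_of_tsum_lt {d : ℝ} (hd : 1 < d) {n : ℕ → ℝ} (hn : ∀ r, 0 ≤ n r)
    (hs : Summable fun r => ((d - 1) / (d + 1)) ^ r * n r) {r₀ : ℕ}
    (h : (d + 1) / (d - 1) * (2 * d) *
      (∑' r, if r₀ < r then ((d - 1) / (d + 1)) ^ r * n r else 0) < 1) :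
    d * ((d - 1) / (d + 1)) ^ (r₀ + 2) * n (r₀ + 3) < 1 := by
  set x := (d - 1) / (d + 1)
  have hx0 : 0 ≤ x := div_nonneg (by linarith) (by linarith)
  have hcx : (d + 1) / (d - 1) * x = 1 := by
    rw [div_mul_div_comm, mul_comm, div_self (by nlinarith)]
  have hterm : 0 ≤ d * x ^ (r₀ + 2) * n (r₀ + 3) :=
    mul_nonneg (mul_nonneg (by linarith) (pow_nonneg hx0 _)) (hn _)
  calc d * x ^ (r₀ + 2) * n (r₀ + 3) ≤ 2 * (d * x ^ (r₀ + 2) * n (r₀ + 3)) := by linarith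
    _ = (d + 1) / (d - 1) * (2 * d) * (x ^ (r₀ + 3) * n (r₀ + 3)) := by
      linear_combination (-2 * x ^ (r₀ + 2) * n (r₀ + 3) * d) * hcx
    _ ≤ _ := mul_le_mul_of_nonneg_left
      (le_tsum_ite_of_lt hs (fun r => mul_nonneg (pow_nonneg hx0 r) (hn r)) (by omega))
      (mul_nonneg (div_nonneg (by linarith) (by linarith)) (by linarith))
    _ < 1 := h

/-- Bunkers. If `((d+1)/(d-1))·2d·∑_{r>r0} ((d-1)/(d+1))^r n_r(G,i) < 1` and at
some time `T` all vertices within distance `r0+2` of `i` agree with `i`, then `i` never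
changes its opinion after time `T` (synchronous majority dynamics, slow-growth graph with
odd degrees at most `d`). -/
theorem stmt_9 {V : Type*} (G : SimpleGraph V) [∀ v : V, Fintype (G.neighborSet v)]
    (hconn : G.Connected)
    (d : ℕ) (hd : 3 ≤ d)
    (hodd : ∀ v, Odd (G.degree v)) (hdeg : ∀ v, G.degree v ≤ d)
    (i : V)
    (hslow : Summable (fun r : ℕ =>
      (((d : ℝ) - 1) / ((d : ℝ) + 1)) ^ r * ({j | G.dist i j = r}.ncard : ℝ)))
    (r0 : ℕ)
    (hr0 : (((d : ℝ) + 1) / ((d : ℝ) - 1)) * (2 * d) *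
      (∑' r : ℕ, if r0 < r then
        (((d : ℝ) - 1) / ((d : ℝ) + 1)) ^ r * ({j | G.dist i j = r}.ncard : ℝ) else 0) < 1)
    (A : ℕ → V → ℤ) (hA0 : ∀ v, A 0 v = 1 ∨ A 0 v = -1)
    (hdyn : ∀ t v, A (t + 1) v =
      if 0 < ∑ j ∈ G.neighborFinset v, A t j then 1 else -1)
    (T : ℕ) (hT : ∀ j : V, G.dist i j ≤ r0 + 2 → A T j = A T i) :
    ∀ t : ℕ, T < t → A t i = A T i := by
  classical
  set C := ⋃ k, G.bootstrap {v | r0 + 2 < G.dist i v} k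
  have hiC : i ∉ C := G.notMem_iUnion_bootstrap_of_lt_one hconn (by omega) hdeg
    (mul_pow_mul_lt_one_of_tsum_lt (by exact_mod_cast (by omega : 1 < d))
      (fun _ => Nat.cast_nonneg _) hslow hr0)
  have hval := SimpleGraph.IsMajorityDynamics.eq_one_or_eq_neg_one (G := G) hdyn hA0
  have hTC : ∀ v ∈ Cᶜ, A T v = A T i := fun v hv =>
    hT v (not_lt.1 fun h => hv (Set.mem_iUnion.2 ⟨0, h⟩))
  intro t ht
  obtain ⟨s, rfl⟩ := Nat.exists_eq_add_of_lt ht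
  exact SimpleGraph.IsMajorityDynamics.eq_of_majority_mem hdyn hval (B := Cᶜ)
    (fun v hv => SimpleGraph.degree_lt_two_mul_card_compl_bootstrap (hodd v) hv) (hval T i) hTC
    (s + 1) i hiC
end

section
/- Let S be uniform on {-1,+1}, and conditioned on S let initial opinions A^i_0 be i.i.d. with P(A^i_0 = S) = p > 1/2. In synchronous majority dynamics on a locally finite graph with odd degrees, for every vertex i and time t, P(A^i_t = S) ≥ p. -/
/-!
Encode the signs `A⁰ʷ·S` as i.i.d. `p`-biased bits. Since the majority map commutes with a global
sign flip, `Aᵗᵥ·S` is a monotone self-dual Boolean function `f` of the finitely many bits in a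
ball around `v`, so `P(Aᵗᵥ = S) = m(p) := P_p(f = 1)`. Self-duality gives `m(1/2) = 1/2`, and
for monotone `f` an induction on the number of bits gives `m (1 - m) ≤ p (1 - p) m'`, i.e. the
odds of `m` grow at least as fast as the odds of `p`; hence `m(p) ≥ p` for `p ≥ 1/2`.
-/

open MeasureTheory ProbabilityTheory Set

theorem le_of_mul_one_sub_le_deriv {m : ℝ → ℝ} {p : ℝ} (hm : Differentiable ℝ m)
    (hm01 : ∀ q ∈ Ioo 0 1, m q ∈ Icc 0 1)
    (hkey : ∀ q ∈ Ioo 0 1, m q * (1 - m q) ≤ q * (1 - q) * deriv m q)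
    (hhalf : m (1 / 2) = 1 / 2) (hp : 1 / 2 ≤ p) (hp1 : p < 1) : p ≤ m p := by
  have hI : ∀ q ∈ Icc (1 / 2 : ℝ) p, q ∈ Ioo 0 1 := fun q hq =>
    ⟨by linarith [hq.1], by linarith [hq.2]⟩
  have hmono : MonotoneOn m (Icc (1 / 2) p) := by
    refine monotoneOn_of_deriv_nonneg (convex_Icc _ _) hm.continuous.continuousOn
      hm.differentiableOn fun q hq => ?_
    have hq := hI q (interior_subset hq)
    have hmq := hm01 q hq
    exact nonneg_of_mul_nonneg_right
      ((mul_nonneg hmq.1 (sub_nonneg.2 hmq.2)).trans (hkey q hq)) (mul_pos hq.1 (sub_pos.2 hq.2))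
  have hden : ∀ q ∈ Icc (1 / 2 : ℝ) p, 0 < m q * (1 - q) := fun q hq =>
    mul_pos (by linarith [hhalf ▸ hmono (left_mem_Icc.2 hp) hq hq.1]) (sub_pos.2 (hI q hq).2)
  -- the ratio of the odds of `q` to the odds of `m q`
  set s : ℝ → ℝ := fun q => q * (1 - m q) / (m q * (1 - q))
  have hs : ∀ q ∈ Icc (1 / 2 : ℝ) p,
      HasDerivAt s ((m q * (1 - m q) - q * (1 - q) * deriv m q) / (m q * (1 - q)) ^ 2) q :=
    fun q hq => by
      have hmq := (hm q).hasDerivAt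
      exact ((hasDerivAt_id q).mul (hmq.const_sub 1)).div (hmq.mul ((hasDerivAt_id q).const_sub 1))
        (hden q hq).ne' |>.congr_deriv (by simp only [id, Pi.mul_apply]; ring)
  have hanti : AntitoneOn s (Icc (1 / 2) p) := by
    refine antitoneOn_of_hasDerivWithinAt_nonpos (convex_Icc _ _)
      (fun q hq => (hs q hq).continuousAt.continuousWithinAt)
      (fun q hq => (hs q (interior_subset hq)).hasDerivWithinAt) fun q hq => ?_
    exact div_nonpos_of_nonpos_of_nonneg (sub_nonpos.2 (hkey q (hI q (interior_subset hq))))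
      (sq_nonneg _)
  have hsp : s p ≤ 1 := by
    have hs_half : s (1 / 2) = 1 := by norm_num [s, hhalf]
    exact hs_half ▸ hanti (left_mem_Icc.2 hp) (right_mem_Icc.2 hp) hp
  have := (div_le_one (hden p (right_mem_Icc.2 hp))).1 hsp
  nlinarith

section BiasedProb

variable {ι κ : Type*} [Fintype ι] [Fintype κ] {p : ℝ}

noncomputable def biasedWeight (p : ℝ) (x : ι → Bool) : ℝ := ∏ i, if x i then p else 1 - p

lemma biasedWeight_nonneg (hp0 : 0 ≤ p) (hp1 : p ≤ 1) (x : ι → Bool) : 0 ≤ biasedWeight p x :=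
  Finset.prod_nonneg fun i _ => by split <;> linarith

lemma biasedWeight_compl (p : ℝ) (x : ι → Bool) : biasedWeight p xᶜ = biasedWeight (1 - p) x := by
  refine Finset.prod_congr rfl fun i _ => ?_
  by_cases h : x i <;> simp [h, Bool.compl_eq_bnot]

lemma biasedWeight_comp_equiv (p : ℝ) (e : ι ≃ κ) (y : κ → Bool) :
    biasedWeight p (y ∘ e) = biasedWeight p y :=
  e.prod_comp fun j => if y j then p else 1 - p

variable [DecidableEq ι] [DecidableEq κ]

lemma sum_biasedWeight (p : ℝ) : ∑ x : ι → Bool, biasedWeight p x = 1 := by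
  simp only [biasedWeight]
  rw [← Fintype.prod_sum fun (_ : ι) (b : Bool) => if b then p else 1 - p]
  simp

noncomputable def biasedProb (p : ℝ) (f : (ι → Bool) → Bool) : ℝ :=
  ∑ x with f x, biasedWeight p x

lemma biasedProb_nonneg (hp0 : 0 ≤ p) (hp1 : p ≤ 1) (f : (ι → Bool) → Bool) :
    0 ≤ biasedProb p f :=
  Finset.sum_nonneg fun x _ => biasedWeight_nonneg hp0 hp1 x

lemma biasedProb_mono (hp0 : 0 ≤ p) (hp1 : p ≤ 1) {f g : (ι → Bool) → Bool} (hfg : f ≤ g) :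
    biasedProb p f ≤ biasedProb p g :=
  Finset.sum_le_sum_of_subset_of_nonneg
    (Finset.monotone_filter_right _ fun x _ => Bool.le_iff_imp.mp (hfg x))
    fun x _ _ => biasedWeight_nonneg hp0 hp1 x

lemma biasedProb_not (p : ℝ) (f : (ι → Bool) → Bool) :
    biasedProb p (fun x : ι → Bool => !f x) = 1 - biasedProb p f := by
  rw [biasedProb, biasedProb, ← sum_biasedWeight (ι := ι) p,
    ← Finset.sum_filter_add_sum_filter_not Finset.univ (fun x : ι → Bool => f x = true)]
  simp

lemma biasedProb_le_one (hp0 : 0 ≤ p) (hp1 : p ≤ 1) (f : (ι → Bool) → Bool) :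
    biasedProb p f ≤ 1 := by
  linarith [biasedProb_not p f, biasedProb_nonneg hp0 hp1 fun x => !f x]

lemma biasedProb_comp_compl (p : ℝ) (f : (ι → Bool) → Bool) :
    biasedProb p (fun x => f xᶜ) = biasedProb (1 - p) f := by
  simp only [biasedProb, Finset.sum_filter]
  rw [← Equiv.sum_comp (compl_involutive.toPerm (compl : (ι → Bool) → (ι → Bool)))]
  simp [biasedWeight_compl]

lemma biasedProb_comp_equiv (p : ℝ) (e : ι ≃ κ) (f : (ι → Bool) → Bool) :
    biasedProb p (fun y : κ → Bool => f (y ∘ e)) = biasedProb p f := by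
  simp only [biasedProb, Finset.sum_filter]
  refine Fintype.sum_equiv (e.arrowCongr (Equiv.refl Bool)).symm _ _ fun y => ?_
  show _ = ite (f (y ∘ e)) (biasedWeight p (y ∘ e)) 0
  rw [biasedWeight_comp_equiv]

lemma biasedProb_half_of_compl {f : (ι → Bool) → Bool} (hf : ∀ x, f xᶜ = (f x)ᶜ) :
    biasedProb (1 / 2) f = 1 / 2 := by
  have h := biasedProb_comp_compl (1 / 2) f
  simp only [hf, Bool.compl_eq_bnot, biasedProb_not] at h
  norm_num at h
  linarith

lemma differentiable_biasedProb (f : (ι → Bool) → Bool) :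
    Differentiable ℝ fun p => biasedProb p f := by
  refine Differentiable.fun_sum fun x _ => Differentiable.fun_finsetProd fun i _ => ?_
  cases x i <;> simp only [Bool.false_eq_true, if_true, if_false] <;> fun_prop

end BiasedProb

section Fin

variable {n : ℕ}

lemma biasedWeight_cons (p : ℝ) (b : Bool) (y : Fin n → Bool) :
    biasedWeight p (Fin.cons b y : Fin (n + 1) → Bool)
      = (if b then p else 1 - p) * biasedWeight p y :=
  Fin.prod_univ_succ _

lemma biasedProb_succ (p : ℝ) (f : (Fin (n + 1) → Bool) → Bool) :
    biasedProb p f = (1 - p) * biasedProb p (fun y => f (Fin.cons false y))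
      + p * biasedProb p (fun y => f (Fin.cons true y)) := by
  simp only [biasedProb, Finset.sum_filter, Finset.mul_sum]
  rw [← (Fin.consEquiv fun _ => Bool).sum_comp, Fintype.sum_prod_type, Fintype.sum_bool,
    add_comm]
  congr 1 <;> refine Finset.sum_congr rfl fun y _ => ?_ <;>
    simp [Fin.consEquiv, biasedWeight_cons, mul_ite]

lemma hasDerivAt_biasedProb_succ (p : ℝ) (f : (Fin (n + 1) → Bool) → Bool) :
    HasDerivAt (fun q => biasedProb q f)
      (biasedProb p (fun y => f (Fin.cons true y)) - biasedProb p (fun y => f (Fin.cons false y))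
        + (1 - p) * deriv (fun q => biasedProb q fun y => f (Fin.cons false y)) p
        + p * deriv (fun q => biasedProb q fun y => f (Fin.cons true y)) p) p := by
  have h0 := (differentiable_biasedProb fun y => f (Fin.cons false y)) p |>.hasDerivAt
  have h1 := (differentiable_biasedProb fun y => f (Fin.cons true y)) p |>.hasDerivAt
  rw [show (fun q => biasedProb q f) = _ from funext fun q => biasedProb_succ q f]
  exact (((hasDerivAt_id p).const_sub 1).mul h0).add ((hasDerivAt_id p).mul h1) |>.congr_deriv
    (by simp only [id]; ring)

theorem biasedProb_mul_one_sub_le_deriv {p : ℝ} {f : (Fin n → Bool) → Bool} (hf : Monotone f)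
    (hp0 : 0 ≤ p) (hp1 : p ≤ 1) :
    biasedProb p f * (1 - biasedProb p f) ≤ p * (1 - p) * deriv (fun q => biasedProb q f) p := by
  induction n with
  | zero =>
    have hconst : ∀ q, biasedProb q f = if f Fin.elim0 then 1 else 0 := fun q => by
      simp only [biasedProb, Finset.sum_filter, biasedWeight, Finset.univ_eq_empty,
        Finset.prod_empty]
      exact Finset.sum_eq_single Fin.elim0 (fun x _ hx => (hx (Subsingleton.elim _ _)).elim)
        fun h => (h (Finset.mem_univ _)).elim
    simp only [hconst, deriv_const']
    split <;> norm_num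
  | succ n ih =>
    have hf₀ : Monotone fun y => f (Fin.cons false y) :=
      fun x y h => hf (Fin.cons_le_cons.2 ⟨le_rfl, h⟩)
    have hf₁ : Monotone fun y => f (Fin.cons true y) :=
      fun x y h => hf (Fin.cons_le_cons.2 ⟨le_rfl, h⟩)
    have hf₀₁ : (fun y => f (Fin.cons false y)) ≤ fun y => f (Fin.cons true y) :=
      fun y => hf (Fin.cons_le_cons.2 ⟨Bool.false_le _, le_rfl⟩)
    rw [(hasDerivAt_biasedProb_succ p f).deriv, biasedProb_succ]
    have hm₀ := biasedProb_nonneg hp0 hp1 fun y => f (Fin.cons false y)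
    have hm₁ := biasedProb_le_one hp0 hp1 fun y => f (Fin.cons true y)
    have hm₀₁ := biasedProb_mono hp0 hp1 hf₀₁
    set m₀ := biasedProb p fun y => f (Fin.cons false y)
    set m₁ := biasedProb p fun y => f (Fin.cons true y)
    -- after the two induction hypotheses, what is left is `p (1 - p) (m₁ - m₀) (1 - (m₁ - m₀)) ≥ 0`
    nlinarith [mul_le_mul_of_nonneg_left (ih hf₀) (sub_nonneg.2 hp1),
      mul_le_mul_of_nonneg_left (ih hf₁) hp0, mul_nonneg (mul_nonneg hp0 (sub_nonneg.2 hp1))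
        (mul_nonneg (sub_nonneg.2 hm₀₁) (by linarith : 0 ≤ 1 - (m₁ - m₀)))]

end Fin

section SignExtend

variable {V : Type*} [DecidableEq V] (D : Finset V)

/-- The value `1` outside `D` is arbitrary. -/
def signExtend (x : D → Bool) (w : V) : ℤ := if h : w ∈ D then if x ⟨w, h⟩ then 1 else -1 else 1

lemma signExtend_eq_one_or (x : D → Bool) (w : V) :
    signExtend D x w = 1 ∨ signExtend D x w = -1 := by
  unfold signExtend
  split_ifs <;> simp

lemma monotone_signExtend : Monotone (signExtend D) := fun x y hxy w => by
  by_cases hw : w ∈ D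
  · have := Bool.le_iff_imp.mp (hxy ⟨w, hw⟩)
    by_cases hx : x ⟨w, hw⟩ <;> by_cases hy : y ⟨w, hw⟩ <;> simp_all [signExtend]
  · simp [signExtend, hw]

variable {D}

lemma signExtend_compl (x : D → Bool) {w : V} (hw : w ∈ D) :
    signExtend D xᶜ w = -signExtend D x w := by
  by_cases hx : x ⟨w, hw⟩ <;> simp [signExtend, hw, hx, Bool.compl_eq_bnot]

lemma signExtend_decide_eq_one {b : V → ℤ} (hb : ∀ w, b w = 1 ∨ b w = -1) {w : V} (hw : w ∈ D) :
    signExtend D (fun i => decide (b i = 1)) w = b w := by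
  rcases hb w with h | h <;> simp [signExtend, hw, h]

end SignExtend

section Probability

variable {ι : Type*} [Fintype ι] [DecidableEq ι] {p : ℝ}

theorem le_biasedProb_of_monotone {f : (ι → Bool) → Bool} (hf : Monotone f)
    (hfc : ∀ x, f xᶜ = (f x)ᶜ) (hp : 1 / 2 ≤ p) (hp1 : p < 1) : p ≤ biasedProb p f := by
  let e := Fintype.equivFin ι
  set g : (Fin (Fintype.card ι) → Bool) → Bool := fun y => f (y ∘ e)
  have hg : Monotone g := fun y y' h => hf fun i => h (e i)
  rw [← biasedProb_comp_equiv p e f]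
  exact le_of_mul_one_sub_le_deriv (differentiable_biasedProb g)
    (fun q hq => ⟨biasedProb_nonneg hq.1.le hq.2.le g, biasedProb_le_one hq.1.le hq.2.le g⟩)
    (fun q hq => biasedProb_mul_one_sub_le_deriv hg hq.1.le hq.2.le)
    (biasedProb_half_of_compl fun y => hfc (y ∘ e)) hp hp1

variable {Ω : Type*} [MeasurableSpace Ω] {μ : Measure Ω} [IsProbabilityMeasure μ]

theorem measure_eq_biasedProb {X : ι → Ω → Bool} (hX : ∀ i, Measurable (X i))
    (hind : iIndepFun X μ) (hp0 : 0 ≤ p) (hp1 : p ≤ 1)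
    (hXp : ∀ i, μ {ω | X i ω = true} = ENNReal.ofReal p) (f : (ι → Bool) → Bool) :
    μ {ω | f (fun i => X i ω) = true} = ENNReal.ofReal (biasedProb p f) := by
  have hfiber : ∀ i b, μ (X i ⁻¹' {b}) = ENNReal.ofReal (if b then p else 1 - p) := by
    intro i b
    have htrue : μ (X i ⁻¹' {true}) = ENNReal.ofReal p := hXp i
    cases b
    · have hcompl : X i ⁻¹' {false} = (X i ⁻¹' {true})ᶜ := by ext; simp
      rw [hcompl, prob_compl_eq_one_sub (hX i (measurableSet_singleton _)), htrue,
        if_neg Bool.false_ne_true, ENNReal.ofReal_sub _ hp0, ENNReal.ofReal_one]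
    · simpa using htrue
  have hcyl : ∀ x, μ ((fun ω i => X i ω) ⁻¹' {x}) = ENNReal.ofReal (biasedWeight p x) := by
    intro x
    have : (fun ω i => X i ω) ⁻¹' {x} = ⋂ i ∈ Finset.univ, X i ⁻¹' {x i} := by
      ext ω; simp [funext_iff]
    rw [this, hind.measure_inter_preimage_eq_mul _ fun i _ => measurableSet_singleton _,
      biasedWeight, ENNReal.ofReal_prod_of_nonneg fun i _ => by split <;> linarith]
    simp only [hfiber]
  calc μ {ω | f (fun i => X i ω) = true}
      = μ ((fun ω i => X i ω) ⁻¹' ↑(Finset.univ.filter fun x => f x = true)) := by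
        congr 1; ext ω; simp
    _ = ∑ x with f x, μ ((fun ω i => X i ω) ⁻¹' {x}) :=
        (sum_measure_preimage_singleton _ fun x _ =>
          measurable_pi_lambda _ hX (measurableSet_singleton x)).symm
    _ = ENNReal.ofReal (biasedProb p f) := by
        rw [biasedProb, ENNReal.ofReal_sum_of_nonneg fun x _ => biasedWeight_nonneg hp0 hp1 x]
        simp only [hcyl]

theorem ofReal_le_measure_eq_one_of_monotone_of_neg {V : Type*} {D : Finset V} {Φ : (V → ℤ) → ℤ}
    (hΦ : ∀ b b', (∀ w ∈ D, b w = b' w) → Φ b = Φ b') (hΦmono : Monotone Φ)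
    (hΦval : ∀ b, (∀ w, b w = 1 ∨ b w = -1) → Φ b = 1 ∨ Φ b = -1)
    (hΦneg : ∀ b, (∀ w, b w = 1 ∨ b w = -1) → Φ (-b) = -Φ b)
    {Y : V → Ω → ℤ} (hYval : ∀ w ω, Y w ω = 1 ∨ Y w ω = -1) (hYmeas : ∀ w, Measurable (Y w))
    (hind : iIndepFun Y μ) (hp : 1 / 2 ≤ p) (hp1 : p < 1)
    (hYp : ∀ w, μ {ω | Y w ω = 1} = ENNReal.ofReal p) :
    ENNReal.ofReal p ≤ μ {ω | Φ (fun w => Y w ω) = 1} := by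
  classical
  set f : (D → Bool) → Bool := fun x => decide (Φ (signExtend D x) = 1)
  have hf : Monotone f := fun x y hxy => Bool.le_iff_imp.2 fun hx => by
    have hle := hΦmono (monotone_signExtend D hxy)
    simp only [f, decide_eq_true_eq] at hx ⊢
    rcases hΦval _ (signExtend_eq_one_or D y) with h | h <;> omega
  have hfc : ∀ x, f xᶜ = (f x)ᶜ := fun x => by
    have hneg : Φ (signExtend D xᶜ) = -Φ (signExtend D x) :=
      (hΦ _ _ fun w hw => signExtend_compl x hw).trans (hΦneg _ (signExtend_eq_one_or D x))
    simp only [f, hneg, Bool.compl_eq_bnot]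
    rcases hΦval _ (signExtend_eq_one_or D x) with h | h <;> simp [h]
  set X : D → Ω → Bool := fun w ω => decide (Y w ω = 1)
  have hset : {ω | Φ (fun w => Y w ω) = 1} = {ω | f (fun w => X w ω) = true} := by
    ext ω
    simp only [f, X, mem_ofPred_eq, decide_eq_true_eq]
    rw [hΦ _ _ fun w hw => signExtend_decide_eq_one (hYval · ω) hw]
  have hsign : Measurable fun z : ℤ => decide (z = 1) := measurable_from_top
  have hX : iIndepFun X μ :=
    (hind.precomp (g := ((↑) : D → V)) Subtype.val_injective).comp _ fun _ => hsign
  have hXmeas : ∀ w, Measurable (X w) := fun w => hsign.comp (hYmeas w)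
  rw [hset, measure_eq_biasedProb hXmeas hX (by linarith) hp1.le
    (fun w => by simpa [X] using hYp w) f]
  exact ENNReal.ofReal_le_ofReal (le_biasedProb_of_monotone hf hfc hp hp1)

end Probability

lemma Finset.odd_sum_of_odd_card {ι : Type*} {s : Finset ι} {x : ι → ℤ}
    (hx : ∀ j ∈ s, Odd (x j)) (hs : Odd s.card) : Odd (∑ j ∈ s, x j) := by
  rw [Int.odd_iff, Finset.sum_int_mod, Finset.sum_congr rfl fun j hj => Int.odd_iff.1 (hx j hj)]
  simpa [Int.odd_iff] using (Int.odd_coe_nat _).2 hs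

namespace SimpleGraph

variable {V : Type*} (G : SimpleGraph V) [∀ v, Fintype (G.neighborSet v)]

def majorityDynamics : ℕ → (V → ℤ) → V → ℤ
  | 0, b => b
  | t + 1, b => fun v => if 0 < ∑ j ∈ G.neighborFinset v, majorityDynamics t b j then 1 else -1

variable {G}

lemma eq_majorityDynamics {a : ℕ → V → ℤ}
    (ha : ∀ t v, a (t + 1) v = if 0 < ∑ j ∈ G.neighborFinset v, a t j then 1 else -1) :
    ∀ t, a t = G.majorityDynamics t (a 0)
  | 0 => rfl
  | t + 1 => funext fun v => by rw [ha, eq_majorityDynamics ha t]; rfl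

lemma majorityDynamics_eq_one_or {b : V → ℤ} (hb : ∀ w, b w = 1 ∨ b w = -1) :
    ∀ t v, G.majorityDynamics t b v = 1 ∨ G.majorityDynamics t b v = -1
  | 0, v => hb v
  | t + 1, v => by unfold majorityDynamics; split <;> simp

lemma monotone_majorityDynamics : ∀ t, Monotone (G.majorityDynamics t)
  | 0 => monotone_id
  | t + 1 => fun b b' h v => by
    have := Finset.sum_le_sum fun j (_ : j ∈ G.neighborFinset v) =>
      monotone_majorityDynamics t h j
    simp only [majorityDynamics]
    split_ifs <;> omega

/-- With odd degrees a majority vote is never tied. -/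
lemma majorityDynamics_neg (hodd : ∀ v, Odd (G.degree v)) {b : V → ℤ}
    (hb : ∀ w, b w = 1 ∨ b w = -1) : ∀ t, G.majorityDynamics t (-b) = -G.majorityDynamics t b
  | 0 => rfl
  | t + 1 => funext fun v => by
    have hsum : Odd (∑ j ∈ G.neighborFinset v, G.majorityDynamics t b j) :=
      Finset.odd_sum_of_odd_card (fun j _ => by
        rcases majorityDynamics_eq_one_or (G := G) hb t j with h | h <;> rw [h] <;> decide)
        (G.card_neighborFinset_eq_degree v ▸ hodd v)
    have hne : ∑ j ∈ G.neighborFinset v, G.majorityDynamics t b j ≠ 0 := fun h0 => by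
      simp [h0] at hsum
    simp only [majorityDynamics, majorityDynamics_neg hodd hb t, Pi.neg_apply,
      Finset.sum_neg_distrib]
    split_ifs <;> omega

lemma majorityDynamics_mul_sign (hodd : ∀ v, Odd (G.degree v)) {b : V → ℤ}
    (hb : ∀ w, b w = 1 ∨ b w = -1) {s : ℤ} (hs : s = 1 ∨ s = -1) (t : ℕ) (v : V) :
    G.majorityDynamics t (fun w => b w * s) v = G.majorityDynamics t b v * s := by
  rcases hs with rfl | rfl
  · simp
  · rw [show (fun w => b w * -1) = -b by ext; simp, majorityDynamics_neg hodd hb t]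
    simp

lemma exists_finset_majorityDynamics_congr :
    ∀ (t : ℕ) (v : V), ∃ D : Finset V, ∀ b b' : V → ℤ, (∀ w ∈ D, b w = b' w) →
      G.majorityDynamics t b v = G.majorityDynamics t b' v
  | 0, v => ⟨{v}, fun b b' h => h v (Finset.mem_singleton_self v)⟩
  | t + 1, v => by
    classical
    choose D hD using exists_finset_majorityDynamics_congr t
    refine ⟨(G.neighborFinset v).biUnion D, fun b b' h => ?_⟩
    simp only [majorityDynamics]
    rw [Finset.sum_congr rfl fun j hj => hD j b b' fun w hw =>
      h w (Finset.mem_biUnion.2 ⟨j, hj, hw⟩)]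

end SimpleGraph

/-- Let `S` be uniform on `{-1,+1}` and, conditioned on `S`, let the initial
opinions be i.i.d. with `P(A^i_0 = S) = p > 1/2` (formalized: the agreement indicators
`A^i_0·S` together with `S` form an independent family, with `P(A^i_0 = S) = p`). Then in
synchronous majority dynamics on a locally finite graph with odd degrees,
`P(A^i_t = S) ≥ p` for every vertex `i` and time `t`. -/
theorem stmt_13 {V : Type*} (G : SimpleGraph V) [∀ v : V, Fintype (G.neighborSet v)]
    (hodd : ∀ v, Odd (G.degree v))
    {Ω : Type*} [MeasurableSpace Ω] (μ : Measure Ω) [IsProbabilityMeasure μ]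
    (S : Ω → ℤ) (hSmeas : Measurable S)
    (hSval : ∀ ω, S ω = 1 ∨ S ω = -1)
    (hSunif : μ {ω | S ω = 1} = 1 / 2)
    (A : ℕ → V → Ω → ℤ)
    (hA0meas : ∀ v, Measurable (A 0 v))
    (hA0val : ∀ v ω, A 0 v ω = 1 ∨ A 0 v ω = -1)
    (p : ℝ) (hp : 1 / 2 < p) (hp1 : p < 1)
    (hindep : iIndepFun
      (fun o : Option V => Option.elim o S (fun v ω => A 0 v ω * S ω)) μ)
    (hpA : ∀ v, μ {ω | A 0 v ω = S ω} = ENNReal.ofReal p)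
    (hdyn : ∀ ω t v, A (t + 1) v ω =
      if 0 < ∑ j ∈ G.neighborFinset v, A t j ω then 1 else -1) :
    ∀ (v : V) (t : ℕ), ENNReal.ofReal p ≤ μ {ω | A t v ω = S ω} := by
  intro v t
  have hmulS : ∀ a ω, a * S ω = 1 ↔ a = S ω := fun a ω => by
    rw [Int.mul_eq_one_iff_eq_one_or_neg_one]; rcases hSval ω with h | h <;> omega
  have hYval : ∀ w ω, A 0 w ω * S ω = 1 ∨ A 0 w ω * S ω = -1 := fun w ω => by
    rcases hA0val w ω with h | h <;> rcases hSval ω with h' | h' <;> simp [h, h']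
  have hset : {ω | A t v ω = S ω} = {ω | G.majorityDynamics t (fun w => A 0 w ω * S ω) v = 1} := by
    ext ω
    rw [mem_ofPred_eq, mem_ofPred_eq, G.majorityDynamics_mul_sign hodd (hA0val · ω) (hSval ω),
      ← congrFun (G.eq_majorityDynamics (a := fun t v => A t v ω) (hdyn ω) t) v, hmulS]
  obtain ⟨D, hD⟩ := G.exists_finset_majorityDynamics_congr t v
  rw [hset]
  exact ofReal_le_measure_eq_one_of_monotone_of_neg hD
    (fun b b' h => G.monotone_majorityDynamics t h v)
    (fun b hb => G.majorityDynamics_eq_one_or hb t v)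
    (fun b hb => congrFun (G.majorityDynamics_neg hodd hb t) v) hYval
    (fun w => (hA0meas w).mul hSmeas) (hindep.precomp (Option.some_injective V)) hp.le hp1
    fun w => by simpa only [hmulS] using hpA w
end
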